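/- Let G=(V,E) be a directed graph, possibly cyclic, whose node set is partitioned as V = O ∪ L into observed and latent nodes, and let G^acy be any σ-acyclification of G. Then for any observed node Y ∈ O, the observed Markov blanket of Y in G under σ-separation equals the observed Markov blanket of Y in G^acy under d-separation: MB_σ^G(Y) = MB_d^{G^acy}(Y). -/

import Mathlib

/-- A directed graph (loopless, possibly cyclic). -/
structure DiGraph (V : Type) where
  Edge : V → V → Prop
  loopless : ∀ v, ¬ Edge v v

namespace DiGraph

variable {V : Type}

/-- Reachability by a directed path (possibly of length zero). -/
def reach (G : DiGraph V) : V → V → Prop := Relation.ReflTransGen G.Edge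

/-- Ancestors of a set: nodes admitting a directed path (possibly of length zero)
to some node of the set. -/
def anc (G : DiGraph V) (S : Set V) : Set V := {Z | ∃ s ∈ S, G.reach Z s}

/-- The strongly connected component of a node. -/
def scc (G : DiGraph V) (X : V) : Set V := {Z | G.reach X Z ∧ G.reach Z X}

/-- Descendants: nodes `Z ≠ X` with a directed path from `X` to `Z`. -/
def de (G : DiGraph V) (X : V) : Set V := {Z | Z ≠ X ∧ Relation.TransGen G.Edge X Z}

/-- Children of a node. -/
def ch (G : DiGraph V) (X : V) : Set V := {Z | G.Edge X Z}

/-- A directed graph is acyclic (a DAG) if it has no directed cycles. -/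
def Acyclic (G : DiGraph V) : Prop := ∀ v, ¬ Relation.TransGen G.Edge v v

end DiGraph

/-- A path between `X` and `Y` in `G`: a sequence of `k+2` distinct nodes,
where consecutive nodes are joined by an edge of `G` in one of the two
orientations (recorded by `dir`: `dir i = true` means the edge
`node i → node (i+1)` is used, `dir i = false` means `node (i+1) → node i`). -/
structure GPath {V : Type} (G : DiGraph V) (X Y : V) where
  k : ℕ
  node : Fin (k + 2) → V
  dir : Fin (k + 1) → Bool
  inj : Function.Injective node
  first : node 0 = X
  last : node (Fin.last (k + 1)) = Y
  adj : ∀ i : Fin (k + 1),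
    (dir i = true → G.Edge (node i.castSucc) (node i.succ)) ∧
    (dir i = false → G.Edge (node i.succ) (node i.castSucc))

namespace GPath

variable {V : Type} {G : DiGraph V} {X Y : V}

/-- The `j`-th interior (non-endpoint) node of the path (position `j+1`). -/
def inner (p : GPath G X Y) (j : Fin p.k) : V := p.node j.succ.castSucc

/-- The interior node at position `j+1` is a collider: both incident edges
of the path point into it. -/
def isCollider (p : GPath G X Y) (j : Fin p.k) : Prop :=
  p.dir j.castSucc = true ∧ p.dir j.succ = false

/-- The path is σ-blocked by `S`. -/
def sigmaBlocked (p : GPath G X Y) (S : Set V) : Prop :=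
  ∃ j : Fin p.k,
    (p.isCollider j ∧ p.inner j ∉ G.anc S) ∨
    (¬ p.isCollider j ∧ p.inner j ∈ S ∧
      ((p.dir j.succ = true ∧ p.node j.succ.succ ∉ G.scc (p.inner j)) ∨
       (p.dir j.castSucc = false ∧ p.node j.castSucc.castSucc ∉ G.scc (p.inner j))))

/-- The path is d-blocked by `S`. -/
def dBlocked (p : GPath G X Y) (S : Set V) : Prop :=
  ∃ j : Fin p.k,
    (p.isCollider j ∧ p.inner j ∉ G.anc S) ∨
    (¬ p.isCollider j ∧ p.inner j ∈ S)

end GPath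

namespace DiGraph

variable {V : Type}

/-- `X` and `Y` are σ-separated given `S`: every path between them is σ-blocked. -/
def sigmaSep (G : DiGraph V) (X Y : V) (S : Set V) : Prop :=
  ∀ p : GPath G X Y, p.sigmaBlocked S

/-- `X` and `Y` are d-separated given `S`: every path between them is d-blocked. -/
def dSep (G : DiGraph V) (X Y : V) (S : Set V) : Prop :=
  ∀ p : GPath G X Y, p.dBlocked S

end DiGraph

/-- `Ga` is a σ-acyclification of `G`. -/
def IsAcyclification {V : Type} (G Ga : DiGraph V) : Prop :=
  Ga.Acyclic ∧
  (∀ X Y : V, X ≠ Y → X ∉ G.scc Y → (Ga.Edge X Y ↔ ∃ W ∈ G.scc Y, G.Edge X W)) ∧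
  (∀ X Y : V, X ≠ Y → X ∈ G.scc Y → Xor' (Ga.Edge X Y) (Ga.Edge Y X))

namespace DiGraph

variable {V : Type}

/-- `S` is the observed Markov blanket of `X` (w.r.t. σ-separation) given the
observed node set `Obs`: the minimal set `S ⊆ Obs \ {X}` such that `X` is
σ-separated from every node of `Obs \ (S ∪ {X})` given `S`. -/
def IsSigmaMB (G : DiGraph V) (Obs : Set V) (X : V) (S : Set V) : Prop :=
  S ⊆ Obs \ {X} ∧
  (∀ W ∈ Obs \ (S ∪ {X}), G.sigmaSep X W S) ∧
  (∀ T ⊆ Obs \ {X}, (∀ W ∈ Obs \ (T ∪ {X}), G.sigmaSep X W T) → S ⊆ T)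

/-- `S` is the observed Markov blanket of `X` (w.r.t. d-separation). -/
def IsDMB (G : DiGraph V) (Obs : Set V) (X : V) (S : Set V) : Prop :=
  S ⊆ Obs \ {X} ∧
  (∀ W ∈ Obs \ (S ∪ {X}), G.dSep X W S) ∧
  (∀ T ⊆ Obs \ {X}, (∀ W ∈ Obs \ (T ∪ {X}), G.dSep X W T) → S ⊆ T)

/-- `Z` is a backdoor adjustment set for `(X, Y)`: `Z` avoids `X`, `Y` and the
descendants of `X`, and σ-blocks every backdoor path from `X` to `Y`
(a path whose first edge has an arrowhead into `X`). -/
def IsBackdoorAdjustment (G : DiGraph V) (X Y : V) (Z : Set V) : Prop :=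
  X ∉ Z ∧ Y ∉ Z ∧ Z ∩ G.de X = ∅ ∧
  ∀ p : GPath G X Y, p.dir 0 = false → p.sigmaBlocked Z

end DiGraph

/-- Pre-treatment assumption: the outcome `Y` has no descendants and the
treatment `X` has no children except possibly `Y`. -/
def PreTreatment {V : Type} (G : DiGraph V) (X Y : V) : Prop :=
  G.de Y = ∅ ∧ G.ch X ⊆ {Y}


/-!
For distinct nodes, σ-separation in `G` and d-separation in `G^acy` coincide, and the two Markov
blankets are defined by the same separation statements.

Both separations are decided by walks: shortcutting a walk between two visits of a node keeps it
open, since a node that becomes a collider can be followed forwards along the walk to a collider.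
In a DAG σ- and d-separation agree, as adjacent nodes lie in different components. An open walk
of `G^acy` expands, edge by edge, into directed paths of `G` that stay inside one strongly
connected component, and the result is σ-open.
Conversely, every maximal run of an open walk of `G` inside one component `C` is replaced by at
most two edges of `G^acy`: an edge of `G` leaving `C` keeps its tail, while a head in `C` may be
moved to any node of `C`, namely onto the tail of the other boundary edge, or, if both boundary
edges point into `C`, onto a node of `C` that is an ancestor of `S` in `G^acy`; such a node exists
because the run then contains a collider.
-/

namespace DiGraph

variable {V : Type} {G : DiGraph V} {S : Set V} {x y z u v w x' y' : V}

theorem mem_scc_self (G : DiGraph V) (x : V) : x ∈ G.scc x :=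
  ⟨.refl, .refl⟩

theorem mem_scc_comm : x ∈ G.scc y ↔ y ∈ G.scc x :=
  and_comm

theorem mem_scc_trans (hxy : x ∈ G.scc y) (hyz : y ∈ G.scc z) : x ∈ G.scc z :=
  ⟨hyz.1.trans hxy.1, hxy.2.trans hyz.2⟩

theorem scc_eq_of_mem (h : x ∈ G.scc y) : G.scc x = G.scc y :=
  Set.ext fun _ => ⟨fun hz => mem_scc_trans hz h, fun hz => mem_scc_trans hz (mem_scc_comm.1 h)⟩

theorem mem_anc_of_mem (hx : x ∈ S) : x ∈ G.anc S :=
  ⟨x, hx, .refl⟩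

theorem mem_anc_of_reach (hxy : G.reach x y) (hy : y ∈ G.anc S) : x ∈ G.anc S :=
  let ⟨s, hs, hys⟩ := hy
  ⟨s, hs, hxy.trans hys⟩

theorem Acyclic.not_mem_scc_of_edge (hG : G.Acyclic) (e : G.Edge u v) : u ∉ G.scc v :=
  fun h => hG u (.head' e h.1)

def Step (G : DiGraph V) : Bool → V → V → Prop
  | true, u, v => G.Edge u v
  | false, u, v => G.Edge v u

theorem step_iff {b : Bool} {u v : V} :
    G.Step b u v ↔ (b = true → G.Edge u v) ∧ (b = false → G.Edge v u) := by
  cases b <;> simp [Step]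

theorem Acyclic.not_mem_scc_of_step (hG : G.Acyclic) {b : Bool} (h : G.Step b u v) :
    u ∉ G.scc v := by
  cases b
  · exact fun huv => hG.not_mem_scc_of_edge h (mem_scc_comm.1 huv)
  · exact hG.not_mem_scc_of_edge h

/-- The σ-connection condition at an interior node `v` of a walk, entered from `u` by a step
of direction `dl` and left towards `w` by a step of direction `dr`. -/
def OpenAt (G : DiGraph V) (S : Set V) (u v w : V) (dl dr : Bool) : Prop :=
  (dl = true → dr = false → v ∈ G.anc S) ∧
  (v ∈ S → (dr = true → w ∈ G.scc v) ∧ (dl = false → u ∈ G.scc v))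

theorem openAt_of_mem_anc (hv : v ∈ G.anc S) : G.OpenAt S u v w true false :=
  ⟨fun _ _ => hv, fun _ => ⟨nofun, nofun⟩⟩

theorem openAt_of_not_mem {dl dr : Bool} (hv : v ∉ S) (hnc : dl = false ∨ dr = true) :
    G.OpenAt S u v w dl dr := by
  refine ⟨fun hl hr => ?_, fun h => absurd h hv⟩
  simp_all

theorem OpenAt.not_mem_of_forward {dl : Bool} (h : G.OpenAt S u v w dl true)
    (hw : w ∉ G.scc v) : v ∉ S :=
  fun hv => hw ((h.2 hv).1 rfl)

theorem OpenAt.not_mem_of_backward {dr : Bool} (h : G.OpenAt S u v w false dr)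
    (hu : u ∉ G.scc v) : v ∉ S :=
  fun hv => hu ((h.2 hv).2 rfl)

/-- Gluing the way a node is entered at one visit to the way it is left at another. -/
theorem OpenAt.splice {u' w' : V} {dl dr dl' dr' : Bool} (h : G.OpenAt S u v w dl dr)
    (h' : G.OpenAt S u' v w' dl' dr') (hcol : dl = true → dr' = false → v ∈ G.anc S) :
    G.OpenAt S u v w' dl dr' :=
  ⟨hcol, fun hv => ⟨(h'.2 hv).1, (h.2 hv).2⟩⟩

/-- The values of `node` beyond `length` and of `dir` from `length` on are junk. -/
structure Walk (G : DiGraph V) (x y : V) where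
  length : ℕ
  node : ℕ → V
  dir : ℕ → Bool
  node_zero : node 0 = x
  node_length : node length = y
  step : ∀ i < length, G.Step (dir i) (node i) (node (i + 1))

namespace Walk

def IsOpen (p : G.Walk x y) (S : Set V) : Prop :=
  ∀ i, i + 1 < p.length →
    G.OpenAt S (p.node i) (p.node (i + 1)) (p.node (i + 2)) (p.dir i) (p.dir (i + 1))

def nil (G : DiGraph V) (x : V) : G.Walk x x where
  length := 0
  node _ := x
  dir _ := true
  node_zero := rfl
  node_length := rfl
  step _ h := absurd h (Nat.not_lt_zero _)

def cons {b : Bool} (h : G.Step b x y) (p : G.Walk y z) : G.Walk x z where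
  length := p.length + 1
  node | 0 => x | i + 1 => p.node i
  dir | 0 => b | i + 1 => p.dir i
  node_zero := rfl
  node_length := p.node_length
  step
    | 0, _ => by
      show G.Step b x (p.node 0)
      rwa [p.node_zero]
    | i + 1, hi => p.step i (by omega)

def copy (p : G.Walk x y) (hx : x = x') (hy : y = y') : G.Walk x' y' where
  __ := p
  node_zero := hx ▸ p.node_zero
  node_length := hy ▸ p.node_length

def take (p : G.Walk x y) (m : ℕ) (hm : m ≤ p.length) : G.Walk x (p.node m) where
  __ := p
  length := m
  node_length := rfl
  step i hi := p.step i (by omega)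

def drop (p : G.Walk x y) (m : ℕ) (hm : m ≤ p.length) : G.Walk (p.node m) y where
  length := p.length - m
  node i := p.node (m + i)
  dir i := p.dir (m + i)
  node_zero := rfl
  node_length := by rw [Nat.add_sub_cancel' hm, p.node_length]
  step i hi := p.step (m + i) (by omega)

def append (p : G.Walk x y) (q : G.Walk y z) : G.Walk x z where
  length := p.length + q.length
  node i := if i ≤ p.length then p.node i else q.node (i - p.length)
  dir i := if i < p.length then p.dir i else q.dir (i - p.length)
  node_zero := by simp [p.node_zero]
  node_length := by
    split_ifs with h
    · have hq : q.length = 0 := by omega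
      rw [hq, Nat.add_zero, p.node_length, ← q.node_zero, ← hq, q.node_length]
    · rw [Nat.add_sub_cancel_left, q.node_length]
  step i hi := by
    by_cases hip : i < p.length
    · simpa [hip, hip.le, Nat.succ_le_of_lt hip] using p.step i hip
    · have hq := q.step (i - p.length) (by omega)
      rw [show i - p.length + 1 = i + 1 - p.length by omega] at hq
      by_cases hi' : i = p.length
      · subst hi'
        simpa [p.node_length, ← q.node_zero] using hq
      · simpa [hip, show ¬ i ≤ p.length by omega, show ¬ i + 1 ≤ p.length by omega] using hq

theorem append_node_of_le (p : G.Walk x y) (q : G.Walk y z) {i : ℕ} (hi : i ≤ p.length) :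
    (p.append q).node i = p.node i :=
  if_pos hi

theorem append_node_add (p : G.Walk x y) (q : G.Walk y z) (i : ℕ) :
    (p.append q).node (p.length + i) = q.node i := by
  rcases i with _ | i
  · simp [append, p.node_length, q.node_zero]
  · simp [append]

theorem append_dir_of_lt (p : G.Walk x y) (q : G.Walk y z) {i : ℕ} (hi : i < p.length) :
    (p.append q).dir i = p.dir i :=
  if_pos hi

theorem append_dir_add (p : G.Walk x y) (q : G.Walk y z) (i : ℕ) :
    (p.append q).dir (p.length + i) = q.dir i := by
  simp [append]

theorem isOpen_nil (x : V) : (nil G x).IsOpen S :=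
  fun _ h => absurd h (Nat.not_lt_zero _)

theorem IsOpen.cons {b : Bool} {h : G.Step b x y} {p : G.Walk y z} (hp : p.IsOpen S)
    (hy : 0 < p.length → G.OpenAt S x y (p.node 1) b (p.dir 0)) : (cons h p).IsOpen S
  | 0, hi => by simpa [Walk.cons, p.node_zero] using hy (by simp [Walk.cons] at hi; omega)
  | i + 1, hi => hp i (by simp [Walk.cons] at hi; omega)

theorem IsOpen.copy {p : G.Walk x y} (hp : p.IsOpen S) (hx : x = x') (hy : y = y') :
    (p.copy hx hy).IsOpen S :=
  hp

theorem IsOpen.take {p : G.Walk x y} (hp : p.IsOpen S) (m : ℕ) (hm : m ≤ p.length) :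
    (p.take m hm).IsOpen S :=
  fun i hi => hp i (by simp [Walk.take] at hi; omega)

theorem IsOpen.drop {p : G.Walk x y} (hp : p.IsOpen S) (m : ℕ) (hm : m ≤ p.length) :
    (p.drop m hm).IsOpen S :=
  fun i hi => hp (m + i) (by simp [Walk.drop] at hi; omega)

theorem IsOpen.append {p : G.Walk x y} {q : G.Walk y z} (hp : p.IsOpen S) (hq : q.IsOpen S)
    (hy : 0 < p.length → 0 < q.length →
      G.OpenAt S (p.node (p.length - 1)) y (q.node 1) (p.dir (p.length - 1)) (q.dir 0)) :
    (p.append q).IsOpen S := by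
  intro i hi
  change i + 1 < p.length + q.length at hi
  rcases lt_trichotomy (i + 1) p.length with h | h | h
  · rw [append_node_of_le _ _ (by omega), append_node_of_le _ _ (by omega),
      append_node_of_le _ _ (by omega), append_dir_of_lt _ _ (by omega),
      append_dir_of_lt _ _ h]
    exact hp i h
  · have hJ := hy (by omega) (by omega)
    rw [show p.length - 1 = i by omega] at hJ
    rw [append_node_of_le _ _ (by omega), append_node_of_le _ _ h.le, h, p.node_length,
      append_dir_of_lt _ _ (by omega), show i + 2 = p.length + 1 by omega, append_node_add,
      ← Nat.add_zero p.length, append_dir_add]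
    exact hJ
  · obtain ⟨j, rfl⟩ : ∃ j, i = p.length + j := ⟨i - p.length, by omega⟩
    simp only [Nat.add_assoc, append_node_add, append_dir_add]
    exact hq j (by omega)


theorem IsOpen.mem_anc_of_forward {p : G.Walk x y} (hp : p.IsOpen S) {i j : ℕ}
    (hi : p.dir i = true) (hij : i < j) (hj : j < p.length) (hdj : p.dir j = false) :
    p.node (i + 1) ∈ G.anc S := by
  obtain ⟨k, rfl⟩ : ∃ k, j = i + 1 + k := ⟨j - (i + 1), by omega⟩
  induction k generalizing i with
  | zero => exact (hp i (by omega)).1 hi hdj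
  | succ k ih =>
    cases hd : p.dir (i + 1)
    · exact (hp i (by omega)).1 hi hd
    · have e := p.step (i + 1) (by omega)
      rw [hd] at e
      exact mem_anc_of_reach (.single e) (ih hd (by omega) (by omega) (by rwa [Nat.add_right_comm]))

/-- Shortcutting the closed subwalk between two visits of the same node keeps a walk open: if the
node is a collider after the shortcut, following the walk forwards from it leads to a collider. -/
theorem exists_isOpen_injOn (p : G.Walk x y) (hp : p.IsOpen S) :
    ∃ q : G.Walk x y, q.IsOpen S ∧ Set.InjOn q.node (Set.Iic q.length) := by
  induction hn : p.length using Nat.strong_induction_on generalizing p with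
  | _ n ih =>
  by_cases hinj : Set.InjOn p.node (Set.Iic p.length)
  · exact ⟨p, hp, hinj⟩
  obtain ⟨i, j, hij, hj, he⟩ : ∃ i j, i < j ∧ j ≤ p.length ∧ p.node i = p.node j := by
    simp only [Set.InjOn, Set.mem_Iic, not_forall] at hinj
    obtain ⟨i, hi, j, hj, he, hne⟩ := hinj
    rcases Nat.lt_or_gt_of_ne hne with h | h
    · exact ⟨i, j, h, hj, he⟩
    · exact ⟨j, i, h, hi, he.symm⟩
  refine ih (i + (p.length - j)) (by omega) ((p.take i (by omega)).append
    ((p.drop j hj).copy he.symm rfl)) ((hp.take i _).append ((hp.drop j hj).copy _ _) ?_) rfl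
  intro hi hj'
  change 0 < i at hi
  change 0 < p.length - j at hj'
  obtain ⟨i, rfl⟩ : ∃ i', i = i' + 1 := ⟨i - 1, by omega⟩
  obtain ⟨j, rfl⟩ : ∃ j', j = j' + 1 := ⟨j - 1, by omega⟩
  have hj'' := hp j (by omega)
  rw [← he] at hj''
  exact (hp i (by omega)).splice hj'' fun hl hr => hp.mem_anc_of_forward hl (by omega)
    (by omega) hr

theorem exists_exit (p : G.Walk x y) {a : ℕ} (ha : a ≤ p.length) (hy : y ∉ G.scc (p.node a)) :
    ∃ m, a ≤ m ∧ m < p.length ∧ p.node m ∈ G.scc (p.node a) ∧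
      p.node (m + 1) ∉ G.scc (p.node a) := by
  classical
  have hex : ∃ k, a + k ≤ p.length ∧ p.node (a + k) ∉ G.scc (p.node a) :=
    ⟨p.length - a, by omega, by rwa [Nat.add_sub_cancel' ha, p.node_length]⟩
  obtain ⟨hk, hkn⟩ := Nat.find_spec hex
  have hk0 : Nat.find hex ≠ 0 := fun h0 => hkn (by rw [h0, Nat.add_zero]; exact G.mem_scc_self _)
  have hmin := Nat.find_min hex (show Nat.find hex - 1 < Nat.find hex by omega)
  refine ⟨a + (Nat.find hex - 1), by omega, by omega, ?_, ?_⟩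
  · by_contra h
    exact hmin ⟨by omega, h⟩
  · rwa [show a + (Nat.find hex - 1) + 1 = a + Nat.find hex by omega]

theorem IsOpen.not_mem_of_forward_exit {p : G.Walk x y} (hp : p.IsOpen S) {m : ℕ} (hm0 : 0 < m)
    (hm : m < p.length) (hd : p.dir m = true) (hexit : p.node (m + 1) ∉ G.scc (p.node m)) :
    p.node m ∉ S := by
  obtain ⟨m, rfl⟩ : ∃ m', m = m' + 1 := ⟨m - 1, by omega⟩
  have h := hp m hm
  rw [hd] at h
  exact h.not_mem_of_forward hexit

theorem IsOpen.not_mem_of_backward_exit {p : G.Walk x y} (hp : p.IsOpen S) {m : ℕ}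
    (hm : m + 1 < p.length) (hd : p.dir m = false) (hexit : p.node m ∉ G.scc (p.node (m + 1))) :
    p.node (m + 1) ∉ S := by
  have h := hp m hm
  rw [hd] at h
  exact h.not_mem_of_backward hexit

/-- `ρ` has to be trivial when `a` is the end of `π`, lest that end become an interior node of
a walk that `ρ` is prepended to. -/
def HasOpenTail (π : G.Walk x y) (Ga : DiGraph V) (S : Set V) (a : ℕ) : Prop :=
  ∃ ρ : Ga.Walk (π.node a) y, ρ.IsOpen S ∧ (0 < ρ.length → a < π.length)

def HasForwardOpenTail (π : G.Walk x y) (Ga : DiGraph V) (S : Set V) (a : ℕ) : Prop :=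
  ∃ ρ : Ga.Walk (π.node a) y, ρ.IsOpen S ∧ ρ.dir 0 = true

def toGPath (p : G.Walk x y) (hp : 0 < p.length) (hinj : Set.InjOn p.node (Set.Iic p.length)) :
    GPath G x y where
  k := p.length - 1
  node i := p.node i
  dir i := p.dir i
  inj i j h := Fin.ext (hinj (by simp; omega) (by simp; omega) h)
  first := p.node_zero
  last := by simp [Nat.sub_add_cancel hp, p.node_length]
  adj i := step_iff.1 (p.step i (by omega))

end Walk

end DiGraph

namespace GPath

open DiGraph

variable {V : Type} {G : DiGraph V} {X Y : V}

theorem step (p : GPath G X Y) (i : Fin (p.k + 1)) :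
    G.Step (p.dir i) (p.node i.castSucc) (p.node i.succ) :=
  step_iff.2 (p.adj i)

theorem sigmaBlocked_iff (p : GPath G X Y) (S : Set V) :
    p.sigmaBlocked S ↔ ∃ j : Fin p.k, ¬ G.OpenAt S (p.node j.castSucc.castSucc) (p.inner j)
      (p.node j.succ.succ) (p.dir j.castSucc) (p.dir j.succ) := by
  refine exists_congr fun j => ?_
  unfold OpenAt isCollider
  cases p.dir j.castSucc <;> cases p.dir j.succ <;> simp; tauto

theorem dBlocked_iff_sigmaBlocked (hG : G.Acyclic) (p : GPath G X Y) (S : Set V) :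
    p.dBlocked S ↔ p.sigmaBlocked S := by
  refine exists_congr fun j => ?_
  have hnext := mem_scc_comm.not.1 (hG.not_mem_scc_of_step (p.step j.succ))
  have hprev := hG.not_mem_scc_of_step (p.step j.castSucc)
  rw [Fin.succ_castSucc] at hprev
  unfold isCollider inner at *
  cases p.dir j.castSucc <;> cases p.dir j.succ <;> simp_all

def toWalk (p : GPath G X Y) : G.Walk X Y where
  length := p.k + 1
  node i := p.node ⟨min i (p.k + 1), by omega⟩
  dir i := p.dir ⟨min i p.k, by omega⟩
  node_zero := by simpa using p.first
  node_length := by simpa [Fin.last] using p.last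
  step i hi := by
    convert p.step ⟨i, hi⟩ using 3 <;> simp <;> omega

theorem sigmaBlocked_iff_not_isOpen (p : GPath G X Y) (S : Set V) :
    p.sigmaBlocked S ↔ ¬ p.toWalk.IsOpen S := by
  have hnode (i : ℕ) (hi : i < p.k + 2) : p.toWalk.node i = p.node ⟨i, hi⟩ :=
    congrArg p.node (Fin.ext (by simp; omega))
  have hdir (i : ℕ) (hi : i < p.k + 1) : p.toWalk.dir i = p.dir ⟨i, hi⟩ :=
    congrArg p.dir (Fin.ext (by simp; omega))
  rw [sigmaBlocked_iff, Walk.IsOpen]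
  push Not
  constructor
  · rintro ⟨j, hj⟩
    refine ⟨j, by change _ < p.k + 1; omega, ?_⟩
    rwa [hnode _ (by omega), hnode _ (by omega), hnode _ (by omega), hdir _ (by omega),
      hdir _ (by omega)]
  · rintro ⟨i, hi, hb⟩
    change i + 1 < p.k + 1 at hi
    refine ⟨⟨i, by omega⟩, ?_⟩
    rwa [hnode _ (by omega), hnode _ (by omega), hnode _ (by omega), hdir _ (by omega),
      hdir _ (by omega)] at hb

end GPath

namespace DiGraph

variable {V : Type} {G : DiGraph V} {S : Set V} {x y : V}

theorem sigmaSep_iff_forall_not_isOpen (hxy : x ≠ y) :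
    G.sigmaSep x y S ↔ ∀ p : G.Walk x y, ¬ p.IsOpen S := by
  refine ⟨fun h p hp => ?_, fun h p => (p.sigmaBlocked_iff_not_isOpen S).2 (h _)⟩
  obtain ⟨q, hq, hinj⟩ := p.exists_isOpen_injOn hp
  have hpos : 0 < q.length := Nat.pos_of_ne_zero fun h0 =>
    hxy (q.node_zero.symm.trans (h0 ▸ q.node_length))
  obtain ⟨j, hj⟩ := (GPath.sigmaBlocked_iff _ S).1 (h (q.toGPath hpos hinj))
  exact hj (hq j (by have := j.isLt; simp [Walk.toGPath] at this; omega))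

theorem dSep_iff_sigmaSep (hG : G.Acyclic) : G.dSep x y S ↔ G.sigmaSep x y S :=
  forall_congr' fun p => p.dBlocked_iff_sigmaBlocked hG S

end DiGraph

namespace IsAcyclification

open DiGraph Walk

variable {V : Type} {G Ga : DiGraph V} {S : Set V} {x y z u v w : V}

theorem edge_of_not_mem_scc (hGa : IsAcyclification G Ga) (hu : u ∉ G.scc v) (e : G.Edge u w)
    (hw : w ∈ G.scc v) : Ga.Edge u v :=
  (hGa.2.1 u v (fun h => hu (h ▸ G.mem_scc_self u)) hu).2 ⟨w, hw, e⟩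

theorem exists_step_of_mem_scc (hGa : IsAcyclification G Ga) (h : u ∈ G.scc v) (hne : u ≠ v) :
    ∃ b, Ga.Step b u v := by
  rcases hGa.2.2 u v hne h with ⟨e, -⟩ | ⟨e, -⟩
  exacts [⟨true, e⟩, ⟨false, e⟩]

theorem exists_edge_mem_scc (hGa : IsAcyclification G Ga) (e : Ga.Edge u v) :
    ∃ c, G.Edge u c ∧ c ∈ G.scc v := by
  by_cases huv : u ∈ G.scc v
  · obtain rfl | ⟨c, huc, hcv⟩ := huv.2.cases_head
    · exact absurd e (Ga.loopless u)
    · exact ⟨c, huc, huv.1.tail huc, hcv⟩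
  · obtain ⟨c, hc, huc⟩ := (hGa.2.1 u v (fun h => huv (h ▸ G.mem_scc_self u)) huv).1 e
    exact ⟨c, huc, hc⟩

theorem reach (hGa : IsAcyclification G Ga) (h : Ga.reach u v) : G.reach u v := by
  induction h with
  | refl => exact .refl
  | tail _ e ih =>
    obtain ⟨c, huc, hc⟩ := hGa.exists_edge_mem_scc e
    exact ih.trans (.head huc hc.2)

theorem anc_subset (hGa : IsAcyclification G Ga) : Ga.anc S ⊆ G.anc S :=
  fun _ ⟨s, hs, h⟩ => ⟨s, hs, hGa.reach h⟩

/-- Following a directed path of `G` towards `S`, the first edge leaving the current component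
is also an edge of `Ga`. -/
theorem exists_mem_scc_mem_anc (hGa : IsAcyclification G Ga) (h : u ∈ G.anc S) :
    ∃ r ∈ G.scc u, r ∈ Ga.anc S := by
  obtain ⟨s, hs, hus⟩ := h
  induction hus using Relation.ReflTransGen.head_induction_on with
  | refl => exact ⟨s, G.mem_scc_self s, mem_anc_of_mem hs⟩
  | @head a c e _ ih =>
    obtain ⟨r, hr, hrS⟩ := ih
    by_cases hac : a ∈ G.scc c
    · exact ⟨r, mem_scc_trans hr (mem_scc_comm.1 hac), hrS⟩
    · refine ⟨a, G.mem_scc_self a, mem_anc_of_reach (.single ?_) hrS⟩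
      exact hGa.edge_of_not_mem_scc (fun har => hac (mem_scc_trans har hr)) e
        (mem_scc_comm.1 hr)

/-- In the acyclic `Ga` an open non-collider lies outside `S`, so it is open in `G` whatever
its neighbours there. -/
theorem openAt {dl dr : Bool} (hGa : IsAcyclification G Ga) (h : Ga.OpenAt S u v w dl dr)
    (hl : Ga.Step dl u v) (hr : Ga.Step dr v w) (u' w' : V) : G.OpenAt S u' v w' dl dr := by
  refine ⟨fun h1 h2 => hGa.anc_subset (h.1 h1 h2), fun hv => ?_⟩
  have hu := hGa.1.not_mem_scc_of_step hl
  have hw := mem_scc_comm.not.1 (hGa.1.not_mem_scc_of_step hr)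
  cases dl <;> cases dr <;> simp_all [OpenAt]

/-- The walk `u → c ⇝ z` followed by `p`, with `c ⇝ z` inside the component of `z`: its new
interior nodes are non-colliders whose successor stays in their component. -/
theorem exists_isOpen_forward {c : V} (hc : c ∈ G.scc z) (p : G.Walk z y) (hp : p.IsOpen S)
    (hz : 0 < p.length → ∀ u, G.OpenAt S u z (p.node 1) true (p.dir 0)) (e : G.Edge u c) :
    ∃ q : G.Walk u y, q.IsOpen S ∧ q.dir 0 = true := by
  suffices h : ∀ c, G.reach c z → G.reach z c → ∀ u, G.Edge u c →
      ∃ q : G.Walk u y, q.IsOpen S ∧ q.dir 0 = true ∧ q.node 1 = c by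
    obtain ⟨q, hq, hd, -⟩ := h c hc.2 hc.1 u e
    exact ⟨q, hq, hd⟩
  intro c hcz
  induction hcz using Relation.ReflTransGen.head_induction_on with
  | refl =>
    exact fun _ u e => ⟨.cons (b := true) e p, hp.cons fun h => hz h u, rfl, p.node_zero⟩
  | @head c c' e' hc'z ih =>
    intro hzc u e
    obtain ⟨q, hq, hd, hn⟩ := ih (hzc.tail e') c e'
    refine ⟨.cons (b := true) e q, hq.cons fun _ => ?_, rfl, q.node_zero⟩
    rw [hd, hn]
    exact ⟨nofun, fun _ => ⟨fun _ => ⟨.single e', hc'z.trans hzc⟩, nofun⟩⟩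

/-- The walk from `x` back along a path `z → c ⇝ x` inside the component of `x`, followed
by `p`. -/
theorem exists_isOpen_backward {c : V} (hc : c ∈ G.scc x) (p : G.Walk z y) (hp : p.IsOpen S)
    (hz : 0 < p.length → ∀ u, G.OpenAt S u z (p.node 1) false (p.dir 0)) (e : G.Edge z c) :
    ∃ q : G.Walk x y, q.IsOpen S ∧ q.dir 0 = false := by
  suffices h : ∀ c', G.reach c c' → G.reach c' x →
      ∃ q : G.Walk c' y, q.IsOpen S ∧ q.dir 0 = false from h x hc.2 .refl
  intro c' hcc'
  induction hcc' with
  | refl => exact fun _ => ⟨.cons (b := false) e p, hp.cons fun h => hz h c, rfl⟩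
  | @tail c'' c' hcc'' e' ih =>
    intro hc'x
    obtain ⟨q, hq, hd⟩ := ih (.head e' hc'x)
    refine ⟨.cons (b := false) e' q, hq.cons fun _ => ?_, rfl⟩
    rw [hd]
    exact ⟨nofun, fun _ => ⟨nofun,
      fun _ => ⟨.single e', hc'x.trans <| hc.1.trans hcc''⟩⟩⟩

theorem exists_isOpen_of_step {b : Bool} (hGa : IsAcyclification G Ga) (h : Ga.Step b x z)
    (p : G.Walk z y) (hp : p.IsOpen S)
    (hz : 0 < p.length → ∀ u, G.OpenAt S u z (p.node 1) b (p.dir 0)) :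
    ∃ q : G.Walk x y, q.IsOpen S ∧ q.dir 0 = b := by
  cases b
  · obtain ⟨c, e, hc⟩ := hGa.exists_edge_mem_scc h
    exact exists_isOpen_backward hc p hp hz e
  · obtain ⟨c, e, hc⟩ := hGa.exists_edge_mem_scc h
    exact exists_isOpen_forward hc p hp hz e

theorem exists_isOpen_of_isOpen_acyclification (hGa : IsAcyclification G Ga) (ρ : Ga.Walk x y)
    (hρ : ρ.IsOpen S) : ∃ p : G.Walk x y, p.IsOpen S := by
  suffices h : ∀ k a, ρ.length - a = k → a ≤ ρ.length → ∃ p : G.Walk (ρ.node a) y,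
      p.IsOpen S ∧ (0 < p.length → a < ρ.length ∧ p.dir 0 = ρ.dir a) by
    obtain ⟨p, hp, -⟩ := h _ 0 rfl (Nat.zero_le _)
    exact ⟨p.copy ρ.node_zero rfl, hp.copy _ _⟩
  intro k
  induction k with
  | zero =>
    intro a hk ha
    obtain rfl : a = ρ.length := by omega
    exact ⟨(nil G y).copy ρ.node_length.symm rfl, isOpen_nil y, nofun⟩
  | succ k ih =>
    intro a hk ha
    obtain ⟨p, hp, hpd⟩ := ih (a + 1) (by omega) (by omega)
    have hjunction (hpos : 0 < p.length) (u' : V) :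
        G.OpenAt S u' (ρ.node (a + 1)) (p.node 1) (ρ.dir a) (p.dir 0) := by
      obtain ⟨ha', hd⟩ := hpd hpos
      rw [hd]
      exact hGa.openAt (hρ a ha') (ρ.step a (by omega)) (ρ.step (a + 1) ha') u' _
    obtain ⟨q, hq, hqd⟩ := hGa.exists_isOpen_of_step (ρ.step a (by omega)) p hp hjunction
    exact ⟨q, hq, fun _ => ⟨by omega, hqd⟩⟩

/-- Let `B` be the `(a+1)`-th node of `π`. If `π` leaves the component of `B` along an edge out
of some `π.node m`, jump there; otherwise `π` enters and leaves that component by edges into it,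
so `B` is an ancestor of `S` and some `r` in the component is an ancestor of `S` in `Ga`, where
it becomes a collider. -/
theorem hasForwardOpenTail (hGa : IsAcyclification G Ga) {π : G.Walk x y} (hπ : π.IsOpen S)
    {a : ℕ} (ha : a < π.length) (hd : π.dir a = true)
    (hexit : π.node (a + 1) ∉ G.scc (π.node a))
    (hP : ∀ m, a < m → m < π.length → π.dir m = true →
      π.node (m + 1) ∉ G.scc (π.node m) → π.HasForwardOpenTail Ga S m)
    (hQ : ∀ m, a < m → m ≤ π.length → π.HasOpenTail Ga S m) :
    π.HasForwardOpenTail Ga S a := by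
  have e : G.Edge (π.node a) (π.node (a + 1)) := by simpa [hd, Step] using π.step a ha
  have haB : π.node a ∉ G.scc (π.node (a + 1)) := fun h => hexit (mem_scc_comm.1 h)
  by_cases hyB : y ∈ G.scc (π.node (a + 1))
  · refine ⟨.cons (b := true) (hGa.edge_of_not_mem_scc ?_ e (mem_scc_comm.1 hyB)) (nil Ga y),
      (isOpen_nil y).cons nofun, rfl⟩
    exact fun h => haB (mem_scc_trans h hyB)
  obtain ⟨m, ham, hm, hmB, hexm⟩ := π.exists_exit (a := a + 1) (by omega) hyB
  cases hdm : π.dir m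
  · obtain ⟨r, hr, hrS⟩ :=
      hGa.exists_mem_scc_mem_anc (hπ.mem_anc_of_forward hd (by omega) hm hdm)
    have e' : G.Edge (π.node (m + 1)) (π.node m) := by simpa [hdm, Step] using π.step m hm
    obtain ⟨ρ, hρ, hρlen⟩ := hQ (m + 1) (by omega) hm
    rw [← scc_eq_of_mem hr] at haB hmB hexm
    refine ⟨.cons (b := true) (hGa.edge_of_not_mem_scc haB e (mem_scc_comm.1 hr))
      (.cons (b := false) (hGa.edge_of_not_mem_scc hexm e' hmB) ρ), ?_, rfl⟩
    refine (hρ.cons fun hpos => openAt_of_not_mem ?_ (.inl rfl)).cons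
      fun _ => openAt_of_mem_anc hrS
    exact hπ.not_mem_of_backward_exit (hρlen hpos) hdm
      fun h => hexm (mem_scc_trans (mem_scc_comm.1 h) hmB)
  · rw [← scc_eq_of_mem hmB] at haB hexm
    obtain ⟨ρ, hρ, hρd⟩ := hP m (by omega) hm hdm hexm
    refine ⟨.cons (b := true) (hGa.edge_of_not_mem_scc haB e (mem_scc_comm.1 hmB)) ρ,
      hρ.cons fun _ => openAt_of_not_mem ?_ (.inr hρd), rfl⟩
    exact hπ.not_mem_of_forward_exit (by omega) hm hdm hexm

/-- `π` leaves the component of its `a`-th node at some `m`. Along an edge out of `π.node m`,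
continue from there after a tournament edge; along an edge into `π.node m`, jump over the
component by the corresponding edge of `Ga` into `π.node a`. -/
theorem hasOpenTail (hGa : IsAcyclification G Ga) {π : G.Walk x y} (hπ : π.IsOpen S) {a : ℕ}
    (ha : a ≤ π.length)
    (hP : ∀ m, a ≤ m → m < π.length → π.dir m = true →
      π.node (m + 1) ∉ G.scc (π.node m) → π.HasForwardOpenTail Ga S m)
    (hQ : ∀ m, a < m → m ≤ π.length → π.HasOpenTail Ga S m) :
    π.HasOpenTail Ga S a := by
  by_cases hay : π.node a = y
  · exact ⟨(nil Ga y).copy hay.symm rfl, isOpen_nil y, nofun⟩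
  have hlt : a < π.length := lt_of_le_of_ne ha fun h => hay (h ▸ π.node_length)
  by_cases hya : y ∈ G.scc (π.node a)
  · obtain ⟨b, e⟩ := hGa.exists_step_of_mem_scc (mem_scc_comm.1 hya) hay
    exact ⟨.cons e (nil Ga y), (isOpen_nil y).cons nofun, fun _ => hlt⟩
  obtain ⟨m, ham, hm, hma, hexm⟩ := π.exists_exit ha hya
  cases hdm : π.dir m
  · have e' : G.Edge (π.node (m + 1)) (π.node m) := by simpa [hdm, Step] using π.step m hm
    obtain ⟨ρ, hρ, hρlen⟩ := hQ (m + 1) (by omega) hm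
    refine ⟨.cons (b := false) (hGa.edge_of_not_mem_scc hexm e' hma) ρ,
      hρ.cons fun hpos => openAt_of_not_mem ?_ (.inl rfl), fun _ => hlt⟩
    exact hπ.not_mem_of_backward_exit (hρlen hpos) hdm
      fun h => hexm (mem_scc_trans (mem_scc_comm.1 h) hma)
  · rw [← scc_eq_of_mem hma] at hexm
    obtain ⟨ρ, hρ, hρd⟩ := hP m ham hm hdm hexm
    by_cases hma' : π.node m = π.node a
    · exact ⟨ρ.copy hma' rfl, hρ.copy _ _, fun _ => hlt⟩
    obtain ⟨b, e⟩ := hGa.exists_step_of_mem_scc (mem_scc_comm.1 hma) (Ne.symm hma')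
    refine ⟨.cons e ρ, hρ.cons fun _ => openAt_of_not_mem ?_ (.inr hρd), fun _ => hlt⟩
    exact hπ.not_mem_of_forward_exit
      (Nat.pos_of_ne_zero fun h0 => hma' (by rw [h0, show a = 0 by omega])) hm hdm hexm

theorem exists_isOpen_acyclification_of_isOpen (hGa : IsAcyclification G Ga) (π : G.Walk x y)
    (hπ : π.IsOpen S) : ∃ ρ : Ga.Walk x y, ρ.IsOpen S := by
  have key : ∀ k a, π.length - a = k → a ≤ π.length →
      (a < π.length → π.dir a = true → π.node (a + 1) ∉ G.scc (π.node a) →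
        π.HasForwardOpenTail Ga S a) ∧ π.HasOpenTail Ga S a := by
    intro k
    induction k using Nat.strong_induction_on with
    | _ k ih =>
    intro a hk ha
    have hP : ∀ m, a < m → m < π.length → π.dir m = true →
        π.node (m + 1) ∉ G.scc (π.node m) → π.HasForwardOpenTail Ga S m :=
      fun m ham hm => (ih _ (by omega) m rfl hm.le).1 hm
    have hQ : ∀ m, a < m → m ≤ π.length → π.HasOpenTail Ga S m :=
      fun m ham hm => (ih _ (by omega) m rfl hm).2
    have hPa := fun ha' hd hexit => hGa.hasForwardOpenTail hπ ha' hd hexit hP hQ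
    refine ⟨hPa, hGa.hasOpenTail hπ ha (fun m ham => ?_) hQ⟩
    rcases ham.eq_or_lt with rfl | ham
    · exact hPa
    · exact hP m ham
  obtain ⟨ρ, hρ, -⟩ := (key _ 0 rfl (Nat.zero_le _)).2
  exact ⟨ρ.copy π.node_zero rfl, hρ.copy _ _⟩

theorem sigmaSep_iff_dSep (hGa : IsAcyclification G Ga) (hxy : x ≠ y) :
    G.sigmaSep x y S ↔ Ga.dSep x y S := by
  rw [dSep_iff_sigmaSep hGa.1, sigmaSep_iff_forall_not_isOpen hxy,
    sigmaSep_iff_forall_not_isOpen hxy]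
  exact ⟨fun h ρ hρ => (hGa.exists_isOpen_of_isOpen_acyclification ρ hρ).elim h,
    fun h p hp => (hGa.exists_isOpen_acyclification_of_isOpen p hp).elim h⟩

end IsAcyclification

theorem sigmaMB_eq_dMB_acyclification_general {V : Type}
    (G Ga : DiGraph V) (Obs : Set V)
    (hGa : IsAcyclification G Ga) (Y : V) (S : Set V) :
    G.IsSigmaMB Obs Y S ↔ Ga.IsDMB Obs Y S := by
  have hsep (T : Set V) : ∀ W ∈ Obs \ (T ∪ {Y}), G.sigmaSep Y W T ↔ Ga.dSep Y W T :=
    fun _ hW => hGa.sigmaSep_iff_dSep fun h => hW.2 (.inr h.symm)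
  exact and_congr_right fun _ => and_congr (forall₂_congr (hsep S))
    (forall₂_congr fun T _ => imp_congr_left (forall₂_congr (hsep T)))

/-- The observed Markov blanket is invariant under
σ-acyclification: `MB_σ^G(Y) = MB_d^{G^acy}(Y)`. -/
theorem sigmaMB_eq_dMB_acyclification {V : Type} [Fintype V]
    (G Ga : DiGraph V) (Obs Lat : Set V)
    (hpart : Obs ∪ Lat = Set.univ) (hdisj : Obs ∩ Lat = ∅)
    (hGa : IsAcyclification G Ga) (Y : V) (hY : Y ∈ Obs) (S : Set V) :
    G.IsSigmaMB Obs Y S ↔ Ga.IsDMB Obs Y S :=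
  sigmaMB_eq_dMB_acyclification_general G Ga Obs hGa Y S
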